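/- arXiv:2310.19134 — 3 statements merged into one kernel-verified Lean document; each statement's English description precedes it below -/
import Mathlib

section
/- For any w in the open unit ball B ⊂ R^d and any z in the closed unit ball, the shift map σ(w,z) = ((1-|w|²)z - (1+|z|²-2⟨w,z⟩)w)/(1 - 2⟨w,z⟩ + |w|²|z|²) satisfies |σ(w,z)| ≤ 1, and if |z| = 1 then |σ(w,z)| = 1. -/
noncomputable def shiftMap {d : ℕ} (w z : EuclideanSpace ℝ (Fin d)) :
    EuclideanSpace ℝ (Fin d) :=
  (1 - 2 * (inner ℝ w z : ℝ) + ‖w‖ ^ 2 * ‖z‖ ^ 2)⁻¹ •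
    ((1 - ‖w‖ ^ 2) • z - (1 + ‖z‖ ^ 2 - 2 * (inner ℝ w z : ℝ)) • w)

theorem shift_maps_ball_to_ball {d : ℕ} (w z : EuclideanSpace ℝ (Fin d))
    (hw : ‖w‖ < 1) (hz : ‖z‖ ≤ 1) :
    ‖shiftMap w z‖ ≤ 1 ∧ (‖z‖ = 1 → ‖shiftMap w z‖ = 1) := by
  have hwn : (0:ℝ) ≤ ‖w‖ := norm_nonneg w
  have hzn : (0:ℝ) ≤ ‖z‖ := norm_nonneg z
  have hia : (inner ℝ w z : ℝ) ≤ ‖w‖ * ‖z‖ := real_inner_le_norm w z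
  have hpq : ‖w‖ * ‖z‖ < 1 := by nlinarith
  have hD : (0:ℝ) < 1 - 2 * (inner ℝ w z : ℝ) + ‖w‖ ^ 2 * ‖z‖ ^ 2 := by
    nlinarith [mul_pos (sub_pos.mpr hpq) (sub_pos.mpr hpq)]
  have hv : ‖(1 - ‖w‖ ^ 2) • z - (1 + ‖z‖ ^ 2 - 2 * (inner ℝ w z : ℝ)) • w‖ ^ 2
      = (1 - ‖w‖ ^ 2) ^ 2 * ‖z‖ ^ 2
        - 2 * ((1 - ‖w‖ ^ 2) * (1 + ‖z‖ ^ 2 - 2 * (inner ℝ w z : ℝ))) * (inner ℝ w z : ℝ)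
        + (1 + ‖z‖ ^ 2 - 2 * (inner ℝ w z : ℝ)) ^ 2 * ‖w‖ ^ 2 := by
    rw [norm_sub_sq_real, norm_smul, norm_smul, real_inner_smul_left,
      real_inner_smul_right, real_inner_comm z w]
    simp [mul_pow, sq_abs]
    ring
  have hs : ‖shiftMap w z‖ * (1 - 2 * (inner ℝ w z : ℝ) + ‖w‖ ^ 2 * ‖z‖ ^ 2)
      = ‖(1 - ‖w‖ ^ 2) • z - (1 + ‖z‖ ^ 2 - 2 * (inner ℝ w z : ℝ)) • w‖ := by
    rw [shiftMap, norm_smul, Real.norm_eq_abs, abs_of_pos (inv_pos.mpr hD),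
      mul_comm (1 - 2 * (inner ℝ w z : ℝ) + ‖w‖ ^ 2 * ‖z‖ ^ 2)⁻¹, mul_assoc,
      inv_mul_cancel₀ hD.ne', mul_one]
  have hkey : ‖shiftMap w z‖ ^ 2 * (1 - 2 * (inner ℝ w z : ℝ) + ‖w‖ ^ 2 * ‖z‖ ^ 2) ^ 2
      = (1 - 2 * (inner ℝ w z : ℝ) + ‖w‖ ^ 2 * ‖z‖ ^ 2) ^ 2
        - (1 - ‖w‖ ^ 2) * (1 - ‖z‖ ^ 2)
          * (1 - 2 * (inner ℝ w z : ℝ) + ‖w‖ ^ 2 * ‖z‖ ^ 2) := by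
    have h2 : ‖shiftMap w z‖ ^ 2 * (1 - 2 * (inner ℝ w z : ℝ) + ‖w‖ ^ 2 * ‖z‖ ^ 2) ^ 2
        = ‖(1 - ‖w‖ ^ 2) • z - (1 + ‖z‖ ^ 2 - 2 * (inner ℝ w z : ℝ)) • w‖ ^ 2 := by
      rw [← hs]; ring
    rw [h2, hv]; ring
  have hsn : (0:ℝ) ≤ ‖shiftMap w z‖ := norm_nonneg _
  have hc : (0:ℝ) ≤ (1 - ‖w‖ ^ 2) * (1 - ‖z‖ ^ 2)
      * (1 - 2 * (inner ℝ w z : ℝ) + ‖w‖ ^ 2 * ‖z‖ ^ 2) := by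
    apply mul_nonneg (mul_nonneg (by nlinarith) (by nlinarith)) hD.le
  have hsq1 : ‖shiftMap w z‖ ^ 2 ≤ 1 := by
    nlinarith [mul_pos hD hD]
  constructor
  · nlinarith [hsq1, hsn]
  · intro h1
    have hq : ‖z‖ ^ 2 = 1 := by rw [h1]; ring
    have hsq : ‖shiftMap w z‖ ^ 2 = 1 := by
      have hD2 : (0:ℝ) < (1 - 2 * (inner ℝ w z : ℝ) + ‖w‖ ^ 2 * ‖z‖ ^ 2) ^ 2 := by positivity
      have h3 : ‖shiftMap w z‖ ^ 2 * (1 - 2 * (inner ℝ w z : ℝ) + ‖w‖ ^ 2 * ‖z‖ ^ 2) ^ 2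
          = 1 * (1 - 2 * (inner ℝ w z : ℝ) + ‖w‖ ^ 2 * ‖z‖ ^ 2) ^ 2 := by
        rw [hkey, hq]; ring
      exact mul_right_cancel₀ (ne_of_gt hD2) h3
    have hmul : (‖shiftMap w z‖ - 1) * (‖shiftMap w z‖ + 1) = 0 := by
      have : ‖shiftMap w z‖ ^ 2 - 1 = 0 := by rw [hsq]; ring
      nlinarith [this]
    rcases mul_eq_zero.mp hmul with h | h
    · linarith
    · linarith
end

section
/- For any w in the open unit ball B ⊂ R^d and z in the closed unit ball, σ(-w, σ(w, z)) = z, i.e., σ(-w,·) is the inverse of σ(w,·). -/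
theorem shift_neg_w_inverse {d : ℕ} (w z : EuclideanSpace ℝ (Fin d))
    (hw : ‖w‖ < 1) (hz : ‖z‖ ≤ 1) :
    shiftMap (-w) (shiftMap w z) = z := by
  have hw0 := norm_nonneg w
  have hz0 := norm_nonneg z
  have hCS : (inner ℝ w z : ℝ) ≤ ‖w‖ * ‖z‖ := real_inner_le_norm w z
  set a : ℝ := ‖w‖ ^ 2 with ha
  set b : ℝ := ‖z‖ ^ 2 with hb
  set t : ℝ := (inner ℝ w z : ℝ) with ht
  have hD : (0:ℝ) < 1 - 2 * t + a * b := by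
    have h1 : ‖w‖ * ‖z‖ < 1 := by nlinarith
    nlinarith [sq_nonneg (1 - ‖w‖ * ‖z‖)]
  have hDne : (1 - 2 * t + a * b) ≠ 0 := ne_of_gt hD
  have ha1 : a < 1 := by nlinarith
  set s := shiftMap w z with hsdef
  have hs : s = (1 - 2 * t + a * b)⁻¹ • ((1 - a) • z - (1 + b - 2 * t) • w) := rfl
  have hT : (inner ℝ w s : ℝ) =
      (1 - 2 * t + a * b)⁻¹ * ((1 - a) * t - (1 + b - 2 * t) * a) := by
    rw [hs, real_inner_smul_right, inner_sub_right, real_inner_smul_right,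
      real_inner_smul_right, real_inner_self_eq_norm_sq, ← ht, ← ha]
  have hS : ‖s‖ ^ 2 = ((1 - 2 * t + a * b)⁻¹) ^ 2 *
      ((1 - a) ^ 2 * b - 2 * (1 - a) * (1 + b - 2 * t) * t + (1 + b - 2 * t) ^ 2 * a) := by
    rw [hs, ← real_inner_self_eq_norm_sq, real_inner_smul_left, real_inner_smul_right,
      inner_sub_left, inner_sub_right, inner_sub_right, real_inner_smul_left,
      real_inner_smul_left, real_inner_smul_left, real_inner_smul_left,
      real_inner_smul_right, real_inner_smul_right, real_inner_smul_right,
      real_inner_smul_right, real_inner_self_eq_norm_sq, real_inner_self_eq_norm_sq,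
      real_inner_comm w z, ← ht, ← ha, ← hb]
    ring
  have hA : 1 - 2 * (-(inner ℝ w s : ℝ)) + a * ‖s‖ ^ 2 = (1 - a) ^ 2 / (1 - 2 * t + a * b) := by
    rw [hT, hS]
    field_simp
    ring
  have hApos : (0:ℝ) < 1 - 2 * (-(inner ℝ w s : ℝ)) + a * ‖s‖ ^ 2 := by
    rw [hA]
    exact div_pos (pow_pos (by linarith) 2) hD
  have hAne := ne_of_gt hApos
  show shiftMap (-w) s = z
  unfold shiftMap
  rw [inner_neg_left, norm_neg, ← ha, hA, hT, hS, hs]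
  have h1a : (1:ℝ) - a ≠ 0 := by linarith
  match_scalars
  · field_simp
  · field_simp
    ring
end

section
/- Let E = Q - R⁻²QΩᵀγ⁻¹ΩQ, where Q = I_{nd} - YYᵀ with Y = diag(y₁,...,yₙ) for unit vectors yᵢ, R = diag(ρ₁I_d,...,ρₙI_d), Ω = (r₁I_d ⋯ rₙI_d), and γ = ΩR⁻¹QR⁻¹Ωᵀ is assumed invertible. Then E is an orthogonal projector with respect to the inner product ⟨u,v⟩_ρ = Σᵢρᵢ²⟨uᵢ,vᵢ⟩: it satisfies E² = E and E is self-adjoint for ⟨·,·⟩_ρ. -/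
open scoped Matrix

theorem E_is_projector {d n : ℕ}
    (y : Fin n → (Fin d → ℝ)) (hy : ∀ i, y i ⬝ᵥ y i = 1)
    (r ρ : Fin n → ℝ) (hr : ∀ i, 0 < r i) (hρ : ∀ i, 0 < ρ i)
    (Y : Matrix (Fin d × Fin n) (Fin n) ℝ)
    (hY : Y = Matrix.of fun p j => if p.2 = j then y j p.1 else 0)
    (Q : Matrix (Fin d × Fin n) (Fin d × Fin n) ℝ)
    (hQ : Q = 1 - Y * Yᵀ)
    (R : Matrix (Fin d × Fin n) (Fin d × Fin n) ℝ)
    (hR : R = Matrix.blockDiagonal (fun i => ρ i • (1 : Matrix (Fin d) (Fin d) ℝ)))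
    (Ω : Matrix (Fin d) (Fin d × Fin n) ℝ)
    (hΩ : Ω = Matrix.of fun k p => r p.2 * (if k = p.1 then 1 else 0))
    (γ : Matrix (Fin d) (Fin d) ℝ) (hγ : γ = Ω * R⁻¹ * Q * R⁻¹ * Ωᵀ)
    (hγunit : IsUnit γ.det)
    (E : Matrix (Fin d × Fin n) (Fin d × Fin n) ℝ)
    (hE : E = Q - R⁻¹ * R⁻¹ * Q * Ωᵀ * γ⁻¹ * Ω * Q) :
    E * E = E ∧ (R * R) * E = Eᵀ * (R * R) := by
  -- Yᵀ Y = 1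
  have hYY : Yᵀ * Y = 1 := by
    ext i j
    simp only [Matrix.mul_apply, Matrix.transpose_apply, hY, Matrix.of_apply,
      Fintype.sum_prod_type_right]
    rw [Finset.sum_eq_single i]
    · rcases eq_or_ne i j with h | h
      · subst h; simpa [Matrix.one_apply, dotProduct] using hy i
      · simp [h, Ne.symm h, Matrix.one_apply]
    · intro b _ hb; simp [hb]
    · simp
  -- Q is symmetric and idempotent
  have hQT : Qᵀ = Q := by
    simp [hQ, Matrix.transpose_sub, Matrix.transpose_mul, Matrix.transpose_transpose]
  have hq : Q * Q = Q := by
    have h1 : Y * Yᵀ * (Y * Yᵀ) = Y * Yᵀ := by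
      rw [Matrix.mul_assoc, ← Matrix.mul_assoc Yᵀ, hYY, Matrix.one_mul]
    rw [hQ, sub_mul, mul_sub, mul_sub, h1]
    simp only [Matrix.one_mul, Matrix.mul_one]
    abel
  -- R is diagonal
  have hRd : R = Matrix.diagonal (fun p : Fin d × Fin n => ρ p.2) := by
    rw [hR]
    ext ⟨k, i⟩ ⟨l, j⟩
    rw [Matrix.blockDiagonal_apply, Matrix.diagonal_apply]
    by_cases h : i = j
    · subst h
      by_cases h2 : k = l <;> simp [h2, Matrix.one_apply, Prod.ext_iff]
    · simp [h, Prod.ext_iff]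
  have hRinv : R⁻¹ = Matrix.diagonal (fun p : Fin d × Fin n => (ρ p.2)⁻¹) := by
    apply Matrix.inv_eq_right_inv
    rw [hRd, Matrix.diagonal_mul_diagonal, ← Matrix.diagonal_one]
    exact congrArg Matrix.diagonal (funext fun p => mul_inv_cancel₀ (hρ p.2).ne')
  have hri : R⁻¹ * R = 1 := by
    rw [hRinv, hRd, Matrix.diagonal_mul_diagonal, ← Matrix.diagonal_one]
    exact congrArg Matrix.diagonal (funext fun p => inv_mul_cancel₀ (hρ p.2).ne')
  have hir : R * R⁻¹ = 1 := by
    rw [hRinv, hRd, Matrix.diagonal_mul_diagonal, ← Matrix.diagonal_one]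
    exact congrArg Matrix.diagonal (funext fun p => mul_inv_cancel₀ (hρ p.2).ne')
  -- Q vanishes off the block diagonal
  have hQzero : ∀ p q : Fin d × Fin n, p.2 ≠ q.2 → Q p q = 0 := by
    intro p q h
    have hpq : p ≠ q := fun hc => h (by rw [hc])
    rw [hQ]
    simp only [Matrix.sub_apply, Matrix.one_apply_ne hpq, Matrix.mul_apply,
      Matrix.transpose_apply, hY, Matrix.of_apply]
    rw [Finset.sum_eq_zero]
    · ring
    · intro m _
      by_cases h1 : p.2 = m
      · have h2 : q.2 ≠ m := fun hc => h (h1.trans hc.symm)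
        rw [if_neg h2]; ring
      · rw [if_neg h1]; ring
  -- diagonal matrices whose entries depend only on the block index commute with Q
  have key : ∀ g : Fin n → ℝ,
      Matrix.diagonal (fun p : Fin d × Fin n => g p.2) * Q
        = Q * Matrix.diagonal (fun p : Fin d × Fin n => g p.2) := by
    intro g
    ext p q
    rw [Matrix.diagonal_mul, Matrix.mul_diagonal]
    by_cases h : p.2 = q.2
    · rw [h, mul_comm]
    · rw [hQzero p q h]; ring
  have hc2 : Q * R⁻¹ = R⁻¹ * Q := by rw [hRinv]; exact (key fun i => (ρ i)⁻¹).symm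
  have hcR : Q * R = R * Q := by rw [hRd]; exact (key ρ).symm
  -- γ facts
  have hgi : γ * γ⁻¹ = 1 := Matrix.mul_nonsing_inv γ hγunit
  have hig : γ⁻¹ * γ = 1 := Matrix.nonsing_inv_mul γ hγunit
  have hRiT : (R⁻¹)ᵀ = R⁻¹ := by rw [hRinv, Matrix.diagonal_transpose]
  have hγT : γᵀ = γ := by
    rw [hγ]
    simp only [Matrix.transpose_mul, Matrix.transpose_transpose, hQT, hRiT]
    simp only [Matrix.mul_assoc]
  have hγiT : (γ⁻¹)ᵀ = γ⁻¹ := by rw [Matrix.transpose_nonsing_inv, hγT]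
  -- quantified rewriting lemmas
  have hq' : ∀ {m : Type} (X : Matrix (Fin d × Fin n) m ℝ),
      Q * (Q * X) = Q * X := fun X => by rw [← Matrix.mul_assoc, hq]
  have hc2' : ∀ {m : Type} (X : Matrix (Fin d × Fin n) m ℝ),
      Q * (R⁻¹ * X) = R⁻¹ * (Q * X) := fun X => by
    rw [← Matrix.mul_assoc, hc2, Matrix.mul_assoc]
  have hcR' : ∀ {m : Type} (X : Matrix (Fin d × Fin n) m ℝ),
      Q * (R * X) = R * (Q * X) := fun X => by
    rw [← Matrix.mul_assoc, hcR, Matrix.mul_assoc]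
  have hri' : ∀ {m : Type} (X : Matrix (Fin d × Fin n) m ℝ),
      R⁻¹ * (R * X) = X := fun X => by rw [← Matrix.mul_assoc, hri, Matrix.one_mul]
  have hir' : ∀ {m : Type} (X : Matrix (Fin d × Fin n) m ℝ),
      R * (R⁻¹ * X) = X := fun X => by rw [← Matrix.mul_assoc, hir, Matrix.one_mul]
  have hgi' : ∀ {m : Type} (X : Matrix (Fin d) m ℝ),
      γ * (γ⁻¹ * X) = X := fun X => by rw [← Matrix.mul_assoc, hgi, Matrix.one_mul]
  have hig' : ∀ {m : Type} (X : Matrix (Fin d) m ℝ),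
      γ⁻¹ * (γ * X) = X := fun X => by rw [← Matrix.mul_assoc, hig, Matrix.one_mul]
  have hγlem : Ω * R⁻¹ * R⁻¹ * Q * Ωᵀ = γ := by
    rw [hγ]
    simp only [Matrix.mul_assoc, hc2']
  have hγlem' : ∀ {m : Type} (X : Matrix (Fin d) m ℝ),
      Ω * (R⁻¹ * (R⁻¹ * (Q * (Ωᵀ * X)))) = γ * X := fun X => by
    simp only [← Matrix.mul_assoc]
    rw [hγlem]
  constructor
  · rw [hE]
    simp only [Matrix.mul_sub, Matrix.sub_mul, Matrix.mul_assoc]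
    simp only [hq, hq', hc2', hri', hir', hγlem', hgi', hig', Matrix.mul_one, Matrix.one_mul]
    abel
  · have hET : Eᵀ = Q - Q * Ωᵀ * γ⁻¹ * Ω * Q * R⁻¹ * R⁻¹ := by
      rw [hE]
      simp only [Matrix.transpose_sub, Matrix.transpose_mul, Matrix.transpose_transpose,
        hQT, hRiT, hγiT, Matrix.mul_assoc]
    rw [hET, hE]
    simp only [Matrix.mul_sub, Matrix.sub_mul, Matrix.mul_assoc]
    simp only [hq, hq', hc2', hcR, hcR', hri, hri', hir, hir', hγlem', hgi', hig',
      Matrix.mul_one, Matrix.one_mul]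
end
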